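/- arXiv:2206.12945 — 9 statements merged into one kernel-verified Lean document; each statement's English description precedes it below -/
import Mathlib

section
/- Let f : ℝⁿ × ℝ → ℝⁿ be continuously differentiable in its first (state) variable and continuous in its second (time) variable, let δ : ℝ → ℝⁿ be continuous, and let α₀ > 0. Assume that for all x ∈ ℝⁿ, all t ≥ t₀, and all v ∈ ℝⁿ, ⟪Dₓf(x,t) v, v⟫ ≤ −α₀ ‖v‖² (i.e. the Euclidean logarithmic norm of the Jacobian is ≤ −α₀). If x, x* : [t₀, ∞) → ℝⁿ are two differentiable functions satisfying x'(t) = f(x(t), t) + δ(t) and x*'(t) = f(x*(t), t) + δ(t) for all t ≥ t₀, then ‖x(t) − x*(t)‖ ≤ e^{−α₀ (t − t₀)} ‖x(t₀) − x*(t₀)‖ for all t ≥ t₀ (global incremental/exponential stability). -/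
open scoped RealInnerProductSpace

/-!
Integrating the Jacobian bound along the segment from `z` to `y` turns it into the one-sided
Lipschitz condition `⟪F y - F z, y - z⟫ ≤ -α‖y - z‖²`. Applied to the error `e = x - x*` (the
common forcing `δ` cancels), this gives `d/dt ‖e‖² ≤ -2α‖e‖²`, so `exp (2α(t - t₀)) ‖e t‖²` is
nonincreasing on `[t₀, ∞)`; taking square roots gives the bound.
-/

section

variable {E : Type*} [NormedAddCommGroup E] [InnerProductSpace ℝ E]

theorem inner_sub_sub_le_of_inner_fderiv_le {F : E → E} {α : ℝ} (hF : Differentiable ℝ F)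
    (hμ : ∀ z v, ⟪fderiv ℝ F z v, v⟫ ≤ -α * ‖v‖ ^ 2) (y z : E) :
    ⟪F y - F z, y - z⟫ ≤ -α * ‖y - z‖ ^ 2 := by
  set v := y - z
  let g : ℝ → ℝ := fun s => ⟪F (z + s • v), v⟫
  have hg : ∀ s, HasDerivAt g ⟪fderiv ℝ F (z + s • v) v, v⟫ s := fun s => by
    have hline : HasDerivAt (fun s : ℝ => z + s • v) v s := by
      simpa using ((hasDerivAt_id s).smul_const v).const_add z
    simpa using ((hF _).hasFDerivAt.comp_hasDerivAt s hline).inner ℝ (hasDerivAt_const s v)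
  have hmvt := image_sub_le_mul_sub_of_deriv_le (fun s => (hg s).differentiableAt)
    (fun s => (hg s).deriv ▸ hμ _ v) zero_le_one
  simpa [g, v, inner_sub_left] using hmvt

theorem sq_norm_le_exp_mul_of_inner_deriv_le {e e' : ℝ → E} {α t₀ : ℝ}
    (he : ∀ t, t₀ ≤ t → HasDerivAt e (e' t) t)
    (hdecay : ∀ t, t₀ ≤ t → ⟪e' t, e t⟫ ≤ -α * ‖e t‖ ^ 2) {t : ℝ} (ht : t₀ ≤ t) :
    ‖e t‖ ^ 2 ≤ Real.exp (-2 * α * (t - t₀)) * ‖e t₀‖ ^ 2 := by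
  let ψ : ℝ → ℝ := fun s => Real.exp (2 * α * (s - t₀)) * ‖e s‖ ^ 2
  have hψ : ∀ s, t₀ ≤ s → HasDerivAt ψ
      (Real.exp (2 * α * (s - t₀)) * (2 * α) * ‖e s‖ ^ 2
        + Real.exp (2 * α * (s - t₀)) * (2 * ⟪e s, e' s⟫)) s := fun s hs => by
    have hlin : HasDerivAt (fun s => 2 * α * (s - t₀)) (2 * α) s := by
      simpa using ((hasDerivAt_id s).sub_const t₀).const_mul (2 * α)
    exact hlin.exp.mul (he s hs).norm_sq
  have hanti : AntitoneOn ψ (Set.Ici t₀) := by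
    refine antitoneOn_of_hasDerivWithinAt_nonpos (convex_Ici t₀)
      (fun s hs => (hψ s hs).continuousAt.continuousWithinAt)
      (fun s hs => (hψ s (interior_subset hs)).hasDerivWithinAt) fun s hs => ?_
    have hs : t₀ ≤ s := interior_subset hs
    have := hdecay s hs
    rw [real_inner_comm] at this
    have := Real.exp_pos (2 * α * (s - t₀))
    nlinarith
  have h := hanti (Set.mem_Ici.2 le_rfl) ht ht
  simp only [ψ, sub_self, mul_zero, Real.exp_zero, one_mul] at h
  calc ‖e t‖ ^ 2 = Real.exp (-2 * α * (t - t₀)) * ψ t := by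
        simp only [ψ, ← mul_assoc, ← Real.exp_add, neg_mul, neg_add_cancel, Real.exp_zero, one_mul]
    _ ≤ _ := by gcongr

theorem norm_le_exp_mul_of_inner_deriv_le {e e' : ℝ → E} {α t₀ : ℝ}
    (he : ∀ t, t₀ ≤ t → HasDerivAt e (e' t) t)
    (hdecay : ∀ t, t₀ ≤ t → ⟪e' t, e t⟫ ≤ -α * ‖e t‖ ^ 2) {t : ℝ} (ht : t₀ ≤ t) :
    ‖e t‖ ≤ Real.exp (-α * (t - t₀)) * ‖e t₀‖ := by
  refine le_of_sq_le_sq ?_ (by positivity)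
  calc ‖e t‖ ^ 2 ≤ Real.exp (-2 * α * (t - t₀)) * ‖e t₀‖ ^ 2 :=
        sq_norm_le_exp_mul_of_inner_deriv_le he hdecay ht
    _ = (Real.exp (-α * (t - t₀)) * ‖e t₀‖) ^ 2 := by
        rw [mul_pow, ← Real.exp_nat_mul]; ring_nf

end

theorem global_incremental_stability_general {n : ℕ} (t₀ : ℝ)
    (f : EuclideanSpace ℝ (Fin n) → ℝ → EuclideanSpace ℝ (Fin n))
    (δ : ℝ → EuclideanSpace ℝ (Fin n))
    (hf : ∀ t, t₀ ≤ t → ContDiff ℝ 1 (fun y => f y t))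
    (α₀ : ℝ)
    (hμ : ∀ (x : EuclideanSpace ℝ (Fin n)) (t : ℝ), t₀ ≤ t →
      ∀ v : EuclideanSpace ℝ (Fin n),
        ⟪fderiv ℝ (fun y => f y t) x v, v⟫ ≤ -α₀ * ‖v‖ ^ 2)
    (x xs : ℝ → EuclideanSpace ℝ (Fin n))
    (hx : ∀ t, t₀ ≤ t → HasDerivAt x (f (x t) t + δ t) t)
    (hxs : ∀ t, t₀ ≤ t → HasDerivAt xs (f (xs t) t + δ t) t) :
    ∀ t, t₀ ≤ t → ‖x t - xs t‖ ≤ Real.exp (-α₀ * (t - t₀)) * ‖x t₀ - xs t₀‖ := by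
  have hdiff : ∀ t, t₀ ≤ t →
      HasDerivAt (x - xs) (f (x t) t - f (xs t) t) t := fun t ht => by
    simpa only [add_sub_add_right_eq_sub] using (hx t ht).sub (hxs t ht)
  have hdecay : ∀ t, t₀ ≤ t →
      ⟪f (x t) t - f (xs t) t, x t - xs t⟫ ≤ -α₀ * ‖x t - xs t‖ ^ 2 := fun t ht =>
    inner_sub_sub_le_of_inner_fderiv_le ((hf t ht).differentiable one_ne_zero)
      (fun z => hμ z t ht) (x t) (xs t)
  exact fun t ht => norm_le_exp_mul_of_inner_deriv_le hdiff hdecay ht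

/-- first part of Theorem 1. Under the logarithmic-norm bound
`μ[Dₓf(x,t)] ≤ -α₀ < 0` (stated as `⟪Dₓf(x,t)v, v⟫ ≤ -α₀‖v‖²` for all `v`),
any two solutions of `ẋ = f(x,t) + δ(t)` approach each other exponentially:
`‖x(t) - x*(t)‖ ≤ exp(-α₀(t - t₀)) ‖x(t₀) - x*(t₀)‖` (global incremental stability). -/
theorem global_incremental_stability {n : ℕ} (hn : 1 ≤ n) (t₀ : ℝ)
    (f : EuclideanSpace ℝ (Fin n) → ℝ → EuclideanSpace ℝ (Fin n))
    (δ : ℝ → EuclideanSpace ℝ (Fin n))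
    (hf : ∀ t, t₀ ≤ t → ContDiff ℝ 1 (fun y => f y t))
    (hft : ∀ y, ContinuousOn (fun t => f y t) (Set.Ici t₀))
    (hδ : Continuous δ)
    (α₀ : ℝ) (hα₀ : 0 < α₀)
    (hμ : ∀ (x : EuclideanSpace ℝ (Fin n)) (t : ℝ), t₀ ≤ t →
      ∀ v : EuclideanSpace ℝ (Fin n),
        ⟪fderiv ℝ (fun y => f y t) x v, v⟫ ≤ -α₀ * ‖v‖ ^ 2)
    (x xs : ℝ → EuclideanSpace ℝ (Fin n))
    (hx : ∀ t, t₀ ≤ t → HasDerivAt x (f (x t) t + δ t) t)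
    (hxs : ∀ t, t₀ ≤ t → HasDerivAt xs (f (xs t) t + δ t) t) :
    ∀ t, t₀ ≤ t → ‖x t - xs t‖ ≤ Real.exp (-α₀ * (t - t₀)) * ‖x t₀ - xs t₀‖ :=
  global_incremental_stability_general t₀ f δ hf α₀ hμ x xs hx hxs
end

section
/- Let f : ℝⁿ × ℝ → ℝⁿ be continuously differentiable in its first (state) variable and continuous in its second (time) variable, let δ : ℝ → ℝⁿ be continuous, let α : [t₀,∞) → ℝ be continuous, and let α₀ > 0. Assume: (A1) for all x ∈ ℝⁿ, all t ≥ t₀, and all v ∈ ℝⁿ, ⟪Dₓf(x,t) v, v⟫ ≤ −α(t) ‖v‖² and α(t) ≥ α₀; and (A2) ‖f(0,t) + δ(t)‖ / α(t) → 0 as t → ∞. Then every differentiable x : [t₀,∞) → ℝⁿ satisfying x'(t) = f(x(t), t) + δ(t) for all t ≥ t₀ converges to 0 as t → ∞. -/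
open Filter Topology
open scoped RealInnerProductSpace

/-! By the mean value theorem on the segment `[0, y]`, the Jacobian bound makes `f(·, t)` strongly
dissipative: `⟪f(y, t) - f(0, t), y⟫ ≤ -α(t)‖y‖²`. Hence `V = ‖x‖²` satisfies
`V' ≤ 2‖f(0, t) + δ(t)‖‖x‖ - 2α(t)‖x‖²`, and once `‖f(0, t) + δ(t)‖ ≤ (ε/4)α(t)` this gives
`V' ≤ -α₀V` whenever `V ≥ (ε/2)²`. Comparison with `(ε/2)² + C e^{-α₀(t - T)}` then shows that
`V < ε²` eventually. -/

section Dissipative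

variable {E : Type*} [NormedAddCommGroup E] [InnerProductSpace ℝ E]

theorem inner_sub_le_of_inner_fderiv_le {g : E → E} (hg : Differentiable ℝ g) {a : ℝ}
    (hbound : ∀ z v, ⟪fderiv ℝ g z v, v⟫ ≤ -a * ‖v‖ ^ 2) (y z : E) :
    ⟪g y - g z, y - z⟫ ≤ -a * ‖y - z‖ ^ 2 := by
  set v := y - z
  have hderiv : ∀ s : ℝ,
      HasDerivAt (fun s : ℝ => ⟪g (z + s • v), v⟫) ⟪fderiv ℝ g (z + s • v) v, v⟫ s := by
    intro s
    have hline : HasDerivAt (fun s : ℝ => z + s • v) v s := by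
      simpa using ((hasDerivAt_id s).smul_const v).const_add z
    simpa using ((hg _).hasFDerivAt.comp_hasDerivAt s hline).inner ℝ (hasDerivAt_const s v)
  obtain ⟨c, -, hc⟩ := exists_hasDerivAt_eq_slope _ _ zero_lt_one
    (fun s _ => (hderiv s).continuousAt.continuousWithinAt) (fun s _ => hderiv s)
  simp only [one_smul, zero_smul, add_zero, v, add_sub_cancel, sub_zero, div_one] at hc
  rw [inner_sub_left, ← hc]
  exact hbound _ _

theorem inner_add_le_of_inner_fderiv_le {g : E → E} (hg : Differentiable ℝ g) {a : ℝ}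
    (hbound : ∀ z v, ⟪fderiv ℝ g z v, v⟫ ≤ -a * ‖v‖ ^ 2) (d y : E) :
    ⟪g y + d, y⟫ ≤ ‖g 0 + d‖ * ‖y‖ - a * ‖y‖ ^ 2 := by
  have hdiss := inner_sub_le_of_inner_fderiv_le hg hbound y 0
  rw [sub_zero] at hdiss
  have hcs := real_inner_le_norm (g 0 + d) y
  have hsplit : ⟪g y + d, y⟫ = ⟪g y - g 0, y⟫ + ⟪g 0 + d, y⟫ := by
    rw [← inner_add_left]; abel_nf
  linarith

end Dissipative

theorem le_add_mul_exp_of_hasDerivAt {W W' : ℝ → ℝ} {T c r : ℝ}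
    (hW : ∀ s, T ≤ s → HasDerivAt W (W' s) s)
    (hdecay : ∀ s, T ≤ s → r ≤ W s → W' s < -c * (W s - r)) {t : ℝ} (ht : T ≤ t) :
    W t ≤ r + max (W T - r) 0 * Real.exp (-c * (t - T)) := by
  set C := max (W T - r) 0
  have hB : ∀ s, HasDerivAt (fun s => r + C * Real.exp (-c * (s - T)))
      (-c * (C * Real.exp (-c * (s - T)))) s := by
    intro s
    have hlin : HasDerivAt (fun s : ℝ => -c * (s - T)) (-c) s := by
      simpa using ((hasDerivAt_id s).sub_const T).const_mul (-c)
    exact ((hlin.exp.const_mul C).const_add r).congr_deriv (by ring)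
  refine image_le_of_deriv_right_lt_deriv_boundary
    (fun s hs => (hW s hs.1).continuousAt.continuousWithinAt)
    (fun s hs => (hW s hs.1).hasDerivWithinAt) ?_ hB ?_ ⟨ht, le_rfl⟩
  · have := le_max_left (W T - r) 0
    simp only [sub_self, mul_zero, Real.exp_zero, mul_one]
    linarith
  · intro s hs hWB
    have hWs := hdecay s hs.1 (by
      rw [hWB]
      exact le_add_of_nonneg_right (mul_nonneg (le_max_right _ _) (Real.exp_pos _).le))
    rw [hWB] at hWs
    simpa using hWs

theorem eventually_lt_of_hasDerivAt_le_neg_mul {W W' : ℝ → ℝ} {T c r r' : ℝ}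
    (hc : 0 < c) (hr : 0 < r) (hW : ∀ s, T ≤ s → HasDerivAt W (W' s) s)
    (hdecay : ∀ s, T ≤ s → r ≤ W s → W' s ≤ -c * W s) (hr' : r < r') :
    ∀ᶠ t in atTop, W t < r' := by
  have hexp : Tendsto (fun t => r + max (W T - r) 0 * Real.exp (-c * (t - T))) atTop
      (𝓝 (r + max (W T - r) 0 * 0)) := by
    refine tendsto_const_nhds.add (tendsto_const_nhds.mul (Real.tendsto_exp_atBot.comp ?_))
    exact (tendsto_atTop_add_const_right _ (-T) tendsto_id).const_mul_atTop_of_neg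
      (neg_lt_zero.2 hc)
  rw [mul_zero, add_zero] at hexp
  filter_upwards [hexp.eventually (eventually_lt_nhds hr'), eventually_ge_atTop T] with t hlt ht
  refine (le_add_mul_exp_of_hasDerivAt hW (fun s hs hrs => ?_) ht).trans_lt hlt
  nlinarith [hdecay s hs hrs]

theorem all_solutions_tendsto_zero_general {n : ℕ} (t₀ : ℝ)
    (f : EuclideanSpace ℝ (Fin n) → ℝ → EuclideanSpace ℝ (Fin n))
    (δ : ℝ → EuclideanSpace ℝ (Fin n))
    (hf : ∀ t, t₀ ≤ t → ContDiff ℝ 1 (fun y => f y t))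
    (α : ℝ → ℝ)
    (α₀ : ℝ) (hα₀ : 0 < α₀)
    (hA1 : ∀ (x : EuclideanSpace ℝ (Fin n)) (t : ℝ), t₀ ≤ t →
      (∀ v : EuclideanSpace ℝ (Fin n),
        ⟪fderiv ℝ (fun y => f y t) x v, v⟫ ≤ -α t * ‖v‖ ^ 2) ∧ α₀ ≤ α t)
    (hA2 : Tendsto (fun t => ‖f 0 t + δ t‖ / α t) atTop (𝓝 0))
    (x : ℝ → EuclideanSpace ℝ (Fin n))
    (hx : ∀ t, t₀ ≤ t → HasDerivAt x (f (x t) t + δ t) t) :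
    Tendsto x atTop (𝓝 0) := by
  rw [NormedAddGroup.tendsto_nhds_zero]
  intro ε hε
  obtain ⟨T, hT⟩ := ((hA2.eventually (eventually_lt_nhds (by positivity : (0 : ℝ) < ε / 4))).and
    (eventually_ge_atTop t₀)).exists_forall_of_atTop
  -- Once `‖x‖ ≥ ε / 2`, the forcing is at most half of the dissipation, so `‖x‖²` decays.
  have hsq : ∀ᶠ t in atTop, ‖x t‖ ^ 2 < ε ^ 2 := by
    refine eventually_lt_of_hasDerivAt_le_neg_mul (r := (ε / 2) ^ 2) hα₀ (by positivity)
      (fun s hs => (hx s (hT s hs).2).norm_sq) (fun s hs hlarge => ?_) (by nlinarith)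
    obtain ⟨hforcing, hs₀⟩ := hT s hs
    have hαs : α₀ ≤ α s := (hA1 0 s hs₀).2
    have henergy := inner_add_le_of_inner_fderiv_le ((hf s hs₀).differentiable one_ne_zero)
      (fun z v => (hA1 z s hs₀).1 v) (δ s) (x s)
    rw [div_lt_iff₀ (hα₀.trans_le hαs)] at hforcing
    have hxs : ε / 2 ≤ ‖x s‖ := le_of_pow_le_pow_left₀ two_ne_zero (norm_nonneg _) hlarge
    rw [real_inner_comm]
    nlinarith [mul_le_mul_of_nonneg_right hforcing.le (norm_nonneg (x s)),
      mul_le_mul_of_nonneg_left hxs (mul_nonneg (hα₀.trans_le hαs).le (norm_nonneg (x s))),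
      mul_le_mul_of_nonneg_right hαs (sq_nonneg ‖x s‖)]
  filter_upwards [hsq] with t ht
  exact lt_of_pow_lt_pow_left₀ 2 hε.le ht

/-- second part of Theorem 1. Under (A1):
`⟪Dₓf(x,t)v, v⟫ ≤ -α(t)‖v‖²` with `α(t) ≥ α₀ > 0`, and (A2):
`‖f(0,t) + δ(t)‖ / α(t) → 0` as `t → ∞`, every solution of
`ẋ = f(x,t) + δ(t)` converges to `0` as `t → ∞`. -/
theorem all_solutions_tendsto_zero {n : ℕ} (hn : 1 ≤ n) (t₀ : ℝ)
    (f : EuclideanSpace ℝ (Fin n) → ℝ → EuclideanSpace ℝ (Fin n))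
    (δ : ℝ → EuclideanSpace ℝ (Fin n))
    (hf : ∀ t, t₀ ≤ t → ContDiff ℝ 1 (fun y => f y t))
    (hft : ∀ y, ContinuousOn (fun t => f y t) (Set.Ici t₀))
    (hδ : Continuous δ)
    (α : ℝ → ℝ) (hα : ContinuousOn α (Set.Ici t₀))
    (α₀ : ℝ) (hα₀ : 0 < α₀)
    (hA1 : ∀ (x : EuclideanSpace ℝ (Fin n)) (t : ℝ), t₀ ≤ t →
      (∀ v : EuclideanSpace ℝ (Fin n),
        ⟪fderiv ℝ (fun y => f y t) x v, v⟫ ≤ -α t * ‖v‖ ^ 2) ∧ α₀ ≤ α t)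
    (hA2 : Tendsto (fun t => ‖f 0 t + δ t‖ / α t) atTop (𝓝 0))
    (x : ℝ → EuclideanSpace ℝ (Fin n))
    (hx : ∀ t, t₀ ≤ t → HasDerivAt x (f (x t) t + δ t) t) :
    Tendsto x atTop (𝓝 0) :=
  all_solutions_tendsto_zero_general t₀ f δ hf α α₀ hα₀ hA1 hA2 x hx
end

section
/- Let A : [t₀,∞) → (ℝⁿ →L[ℝ] ℝⁿ) be continuous and let z : [t₀,∞) → ℝⁿ be differentiable with z'(t) = A(t) z(t) for all t ≥ t₀. Then for all t ≥ t₀, ‖z(t)‖ ≤ ‖z(t₀)‖ · exp(∫_{t₀}^{t} μ(A(s)) ds), where μ(B) = sup_{‖v‖=1} ⟪B v, v⟫ is the Euclidean logarithmic norm. -/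
open Filter Topology
open scoped RealInnerProductSpace

/-- The Euclidean logarithmic norm of an operator `B : ℝⁿ →L[ℝ] ℝⁿ`,
`μ(B) = sup_{‖v‖=1} ⟪Bv, v⟫`. -/
noncomputable def logNorm {n : ℕ}
    (B : EuclideanSpace ℝ (Fin n) →L[ℝ] EuclideanSpace ℝ (Fin n)) : ℝ :=
  ⨆ v : {v : EuclideanSpace ℝ (Fin n) // ‖v‖ = 1}, ⟪B v.1, v.1⟫


lemma logNorm_bdd {n : ℕ} (B : EuclideanSpace ℝ (Fin n) →L[ℝ] EuclideanSpace ℝ (Fin n)) :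
    BddAbove (Set.range fun v : {v : EuclideanSpace ℝ (Fin n) // ‖v‖ = 1} => ⟪B v.1, v.1⟫) := by
  refine ⟨‖B‖, ?_⟩
  rintro x ⟨v, rfl⟩
  calc ⟪B v.1, v.1⟫ ≤ ‖B v.1‖ * ‖v.1‖ := real_inner_le_norm _ _
    _ ≤ (‖B‖ * ‖v.1‖) * ‖v.1‖ := by
        have := B.le_opNorm v.1
        nlinarith [norm_nonneg v.1]
    _ = ‖B‖ := by rw [v.2]; ring

lemma inner_le_logNorm_mul_sq {n : ℕ}
    (B : EuclideanSpace ℝ (Fin n) →L[ℝ] EuclideanSpace ℝ (Fin n))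
    (v : EuclideanSpace ℝ (Fin n)) : ⟪B v, v⟫ ≤ logNorm B * ‖v‖ ^ 2 := by
  rcases eq_or_ne v 0 with rfl | hv
  · simp
  · have hnv : (0:ℝ) < ‖v‖ := norm_pos_iff.2 hv
    set u : EuclideanSpace ℝ (Fin n) := ‖v‖⁻¹ • v with hu
    have hun : ‖u‖ = 1 := by
      rw [hu, norm_smul, norm_inv, norm_norm, inv_mul_cancel₀ hnv.ne']
    have hle : ⟪B u, u⟫ ≤ logNorm B := le_ciSup (logNorm_bdd B) ⟨u, hun⟩
    have hBu : ⟪B u, u⟫ = ‖v‖⁻¹ * (‖v‖⁻¹ * ⟪B v, v⟫) := by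
      rw [hu, map_smul, real_inner_smul_left, real_inner_smul_right]
    rw [hBu] at hle
    have h2 := mul_le_mul_of_nonneg_left hle (le_of_lt (by positivity : (0:ℝ) < ‖v‖^2))
    calc ⟪B v, v⟫ = ‖v‖^2 * (‖v‖⁻¹ * (‖v‖⁻¹ * ⟪B v, v⟫)) := by
          field_simp
      _ ≤ ‖v‖^2 * logNorm B := h2
      _ = logNorm B * ‖v‖^2 := by ring

lemma logNorm_lipschitz {n : ℕ} : LipschitzWith 1 (logNorm (n := n)) := by
  refine LipschitzWith.of_le_add fun B C => ?_
  by_cases h : Nonempty {v : EuclideanSpace ℝ (Fin n) // ‖v‖ = 1}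
  · refine ciSup_le fun v => ?_
    have h1 : ⟪B v.1, v.1⟫ = ⟪C v.1, v.1⟫ + ⟪(B - C) v.1, v.1⟫ := by
      simp [inner_sub_left]
    have h2 : ⟪C v.1, v.1⟫ ≤ logNorm C := le_ciSup (logNorm_bdd C) v
    have h3 : ⟪(B - C) v.1, v.1⟫ ≤ ‖B - C‖ := by
      calc ⟪(B - C) v.1, v.1⟫ ≤ ‖(B - C) v.1‖ * ‖v.1‖ := real_inner_le_norm _ _
        _ ≤ (‖B - C‖ * ‖v.1‖) * ‖v.1‖ := by
            have := (B - C).le_opNorm v.1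
            nlinarith [norm_nonneg v.1]
        _ = ‖B - C‖ := by rw [v.2]; ring
    rw [dist_eq_norm]
    linarith
  · simp only [logNorm, iSup, Set.range_eq_empty_iff.2 (not_nonempty_iff.1 h)]
    simp [Real.sSup_empty]

/-- Property P5, upper bound. A solution of the linear
time-varying system `ż = A(t)z` satisfies
`‖z(t)‖ ≤ ‖z(t₀)‖ · exp(∫_{t₀}^t μ(A(s)) ds)`. -/
theorem norm_le_exp_integral_logNorm {n : ℕ} (t₀ : ℝ)
    (A : ℝ → EuclideanSpace ℝ (Fin n) →L[ℝ] EuclideanSpace ℝ (Fin n))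
    (hA : ContinuousOn A (Set.Ici t₀))
    (z : ℝ → EuclideanSpace ℝ (Fin n))
    (hz : ∀ t, t₀ ≤ t → HasDerivAt z (A t (z t)) t) :
    ∀ t, t₀ ≤ t → ‖z t‖ ≤ ‖z t₀‖ * Real.exp (∫ s in t₀..t, logNorm (A s)) := by
  intro T hT
  set μf : ℝ → ℝ := fun s => logNorm (A s) with hμf
  have hμc : ContinuousOn μf (Set.Ici t₀) :=
    logNorm_lipschitz.continuous.comp_continuousOn hA
  set φ : ℝ → ℝ := fun u => ∫ s in t₀..u, μf s with hφ
  set g : ℝ → ℝ := fun u => ‖z u‖ ^ 2 with hg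
  set h : ℝ → ℝ := fun u => g u * Real.exp (-(2 * φ u)) with hh
  -- continuity of components on Icc t₀ T
  have hzc : ContinuousOn z (Set.Icc t₀ T) := fun t ht =>
    ((hz t ht.1).continuousAt).continuousWithinAt
  have hgc : ContinuousOn g (Set.Icc t₀ T) := by
    exact (hzc.norm.pow 2)
  have hμInt : MeasureTheory.IntegrableOn μf (Set.uIcc t₀ T) := by
    rw [Set.uIcc_of_le hT]
    exact (hμc.mono (Set.Icc_subset_Ici_self)).integrableOn_compact isCompact_Icc
  have hφc : ContinuousOn φ (Set.Icc t₀ T) := by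
    have := intervalIntegral.continuousOn_primitive_interval hμInt
    rwa [Set.uIcc_of_le hT] at this
  have hhc : ContinuousOn h (Set.Icc t₀ T) :=
    hgc.mul (((continuousOn_const.mul hφc).neg).rexp)
  -- derivative at interior points
  have hderiv : ∀ t ∈ Set.Ioo t₀ T, HasDerivAt h
      ((2 * ⟪A t (z t), z t⟫) * Real.exp (-(2 * φ t))
        + g t * (Real.exp (-(2 * φ t)) * (-(2 * μf t)))) t := by
    intro t ht
    have ht0 : t₀ ≤ t := ht.1.le
    have hzd := hz t ht0
    have hgd : HasDerivAt g (2 * ⟪A t (z t), z t⟫) t := by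
      have hi : HasDerivAt (fun u => ⟪z u, z u⟫)
          (⟪z t, A t (z t)⟫ + ⟪A t (z t), z t⟫) t := hzd.inner ℝ hzd
      have : HasDerivAt (fun u => ⟪z u, z u⟫) (2 * ⟪A t (z t), z t⟫) t := by
        convert hi using 1
        rw [real_inner_comm]; ring
      refine HasDerivAt.congr_deriv (this.congr_of_eventuallyEq ?_) rfl
      filter_upwards with u
      rw [hg, real_inner_self_eq_norm_sq]
    have hμt : ContinuousAt μf t := hμc.continuousAt (Ici_mem_nhds ht.1)
    have hint : IntervalIntegrable μf MeasureTheory.volume t₀ t := by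
      apply (hμInt.mono_set _).intervalIntegrable
      rw [Set.uIcc_of_le ht0, Set.uIcc_of_le hT]
      exact Set.Icc_subset_Icc le_rfl ht.2.le
    have hφd : HasDerivAt φ (μf t) t :=
      intervalIntegral.integral_hasDerivAt_right hint
        (ContinuousOn.stronglyMeasurableAtFilter isOpen_Ioi
          (hμc.mono Set.Ioi_subset_Ici_self) t ht.1) hμt
    have he : HasDerivAt (fun u => Real.exp (-(2 * φ u)))
        (Real.exp (-(2 * φ t)) * (-(2 * μf t))) t := by
      have : HasDerivAt (fun u => -(2 * φ u)) (-(2 * μf t)) t :=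
        ((hφd.const_mul 2).neg)
      exact (Real.hasDerivAt_exp _).comp t this
    exact hgd.mul he
  -- h is antitone on the interval
  have hanti : AntitoneOn h (Set.Icc t₀ T) := by
    apply antitoneOn_of_deriv_nonpos (convex_Icc t₀ T) hhc
    · intro t ht
      rw [interior_Icc] at ht
      exact ((hderiv t ht).differentiableAt).differentiableWithinAt
    · intro t ht
      rw [interior_Icc] at ht
      rw [(hderiv t ht).deriv]
      have key : ⟪A t (z t), z t⟫ ≤ μf t * ‖z t‖ ^ 2 := inner_le_logNorm_mul_sq _ _
      have hexp : (0:ℝ) < Real.exp (-(2 * φ t)) := Real.exp_pos _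
      have hgt : g t = ‖z t‖ ^ 2 := rfl
      rw [← hgt] at key
      nlinarith [mul_nonneg (sub_nonneg.2 key) hexp.le]
  -- conclude
  rcases eq_or_lt_of_le hT with rfl | hlt
  · simp
  have hmem0 : t₀ ∈ Set.Icc t₀ T := ⟨le_rfl, hT⟩
  have hmemT : T ∈ Set.Icc t₀ T := ⟨hT, le_rfl⟩
  have hle := hanti hmem0 hmemT hT
  have hφ0 : φ t₀ = 0 := by simp [hφ]
  have hh0 : h t₀ = ‖z t₀‖ ^ 2 := by simp [hh, hφ0, hg]
  have hhT : h T = ‖z T‖ ^ 2 * Real.exp (-(2 * φ T)) := rfl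
  rw [hh0, hhT] at hle
  have hexpT : (0:ℝ) < Real.exp (φ T) := Real.exp_pos _
  have hsq : ‖z T‖ ^ 2 ≤ (‖z t₀‖ * Real.exp (φ T)) ^ 2 := by
    have h2 : Real.exp (-(2 * φ T)) * Real.exp (2 * φ T) = 1 := by
      rw [← Real.exp_add]; simp
    have h3 : (Real.exp (φ T)) ^ 2 = Real.exp (2 * φ T) := by
      rw [sq, ← Real.exp_add]; ring_nf
    nlinarith [Real.exp_pos (-(2 * φ T)), Real.exp_pos (2 * φ T), sq_nonneg ‖z t₀‖]
  have := Real.sqrt_le_sqrt hsq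
  rwa [Real.sqrt_sq (norm_nonneg _), Real.sqrt_sq (by positivity)] at this
end

section
/- Let A : [t₀,∞) → (ℝⁿ →L[ℝ] ℝⁿ) be continuous and let z : [t₀,∞) → ℝⁿ be differentiable with z'(t) = A(t) z(t) for all t ≥ t₀. Then for all t ≥ t₀, ‖z(t)‖ ≥ ‖z(t₀)‖ · exp(−∫_{t₀}^{t} μ(−A(s)) ds), where μ(B) = sup_{‖v‖=1} ⟪B v, v⟫ is the Euclidean logarithmic norm. -/
/-!
Along a solution, `d/dt ‖z‖² = 2⟪A z, z⟫ ≥ -2 μ(-A) ‖z‖²`, so the function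
`t ↦ ‖z(t)‖² · exp (2 ∫_{t₀}^t μ(-A))` is nondecreasing; comparing its values at `t₀` and `t`
and taking square roots gives the bound.
-/

open Filter Topology
open scoped RealInnerProductSpace

open Set Real

theorem real_inner_apply_self_le_opNorm_mul_sq {E : Type*} [NormedAddCommGroup E]
    [InnerProductSpace ℝ E] (B : E →L[ℝ] E) (v : E) :
    ⟪B v, v⟫ ≤ ‖B‖ * ‖v‖ ^ 2 :=
  calc ⟪B v, v⟫ ≤ ‖B v‖ * ‖v‖ := real_inner_le_norm _ _
    _ ≤ ‖B‖ * ‖v‖ * ‖v‖ := by gcongr; exact B.le_opNorm v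
    _ = ‖B‖ * ‖v‖ ^ 2 := by ring

section LogNorm

variable {n : ℕ}

theorem logNorm_bddAbove (B : EuclideanSpace ℝ (Fin n) →L[ℝ] EuclideanSpace ℝ (Fin n)) :
    BddAbove (range fun v : {v : EuclideanSpace ℝ (Fin n) // ‖v‖ = 1} => ⟪B v.1, v.1⟫) := by
  refine ⟨‖B‖, ?_⟩
  rintro _ ⟨v, rfl⟩
  simpa [v.2] using real_inner_apply_self_le_opNorm_mul_sq B v.1

theorem real_inner_apply_self_le_logNorm_mul_sq
    (B : EuclideanSpace ℝ (Fin n) →L[ℝ] EuclideanSpace ℝ (Fin n)) (v : EuclideanSpace ℝ (Fin n)) :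
    ⟪B v, v⟫ ≤ logNorm B * ‖v‖ ^ 2 := by
  rcases eq_or_ne v 0 with rfl | hv
  · simp
  have hnv : ‖v‖ ≠ 0 := norm_ne_zero_iff.2 hv
  let w : {v : EuclideanSpace ℝ (Fin n) // ‖v‖ = 1} := ⟨‖v‖⁻¹ • v, by simp [norm_smul, hnv]⟩
  have hvw : v = ‖v‖ • w.1 := by simp [w, smul_smul, hnv]
  have hw : ⟪B w.1, w.1⟫ ≤ logNorm B := le_ciSup (logNorm_bddAbove B) w
  calc ⟪B v, v⟫ = ‖v‖ ^ 2 * ⟪B w.1, w.1⟫ := by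
        conv_lhs => rw [hvw, map_smul, real_inner_smul_left, real_inner_smul_right]
        ring
    _ ≤ ‖v‖ ^ 2 * logNorm B := by gcongr
    _ = logNorm B * ‖v‖ ^ 2 := mul_comm _ _

theorem logNorm_le_logNorm_add_norm_sub
    (B C : EuclideanSpace ℝ (Fin n) →L[ℝ] EuclideanSpace ℝ (Fin n)) :
    logNorm B ≤ logNorm C + ‖B - C‖ := by
  rcases isEmpty_or_nonempty {v : EuclideanSpace ℝ (Fin n) // ‖v‖ = 1} with _ | _
  · simp [logNorm, Real.iSup_of_isEmpty]
  refine ciSup_le fun v => ?_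
  have hC : ⟪C v.1, v.1⟫ ≤ logNorm C := le_ciSup (logNorm_bddAbove C) v
  have hBC := real_inner_apply_self_le_opNorm_mul_sq (B - C) v.1
  rw [v.2, one_pow, mul_one, sub_apply, inner_sub_left] at hBC
  linarith

theorem lipschitzWith_one_logNorm :
    LipschitzWith 1 (logNorm : (EuclideanSpace ℝ (Fin n) →L[ℝ] EuclideanSpace ℝ (Fin n)) → ℝ) :=
  LipschitzWith.of_le_add fun B C => by
    simpa [dist_eq_norm] using logNorm_le_logNorm_add_norm_sub B C

end LogNorm

theorem mul_exp_neg_integral_le_of_hasDerivAt {u u' c : ℝ → ℝ} {a b : ℝ} (hab : a ≤ b)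
    (hu : ContinuousOn u (Icc a b)) (hc : ContinuousOn c (Icc a b))
    (hu' : ∀ x ∈ Ioo a b, HasDerivAt u (u' x) x)
    (hle : ∀ x ∈ Ioo a b, -(c x * u x) ≤ u' x) :
    u a * exp (-∫ x in a..b, c x) ≤ u b := by
  set F : ℝ → ℝ := fun x => ∫ s in a..x, c s
  have hF : ContinuousOn F (Icc a b) := by
    simpa [uIcc_of_le hab] using intervalIntegral.continuousOn_primitive_interval
      (hc.mono (uIcc_of_le hab).subset |>.integrableOn_compact isCompact_uIcc)
  have hF' : ∀ x ∈ Ioo a b, HasDerivAt F (c x) x := fun x hx =>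
    intervalIntegral.integral_hasDerivAt_right
      ((hc.mono (Icc_subset_Icc_right hx.2.le)).intervalIntegrable_of_Icc hx.1.le)
      ((hc.mono Ioo_subset_Icc_self).stronglyMeasurableAtFilter isOpen_Ioo x hx)
      (hc.continuousAt (Icc_mem_nhds hx.1 hx.2))
  have hmono : MonotoneOn (fun x => u x * exp (F x)) (Icc a b) := by
    refine monotoneOn_of_hasDerivWithinAt_nonneg (convex_Icc a b) (hu.mul hF.rexp)
      (f' := fun x => (u' x + c x * u x) * exp (F x)) (fun x hx => ?_) fun x hx => ?_
    all_goals rw [interior_Icc] at hx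
    · exact (((hu' x hx).mul (hF' x hx).exp).congr_deriv (by ring)).hasDerivWithinAt
    · exact mul_nonneg (by linarith [hle x hx]) (exp_pos _).le
  have key := hmono (left_mem_Icc.2 hab) (right_mem_Icc.2 hab) hab
  simp only [F, intervalIntegral.integral_same, exp_zero, mul_one] at key
  rwa [exp_neg, ← div_eq_mul_inv, div_le_iff₀ (exp_pos _)]

theorem norm_mul_exp_neg_integral_le_of_hasDerivAt {E : Type*} [NormedAddCommGroup E]
    [InnerProductSpace ℝ E] {f f' : ℝ → E} {c : ℝ → ℝ} {a b : ℝ} (hab : a ≤ b)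
    (hf : ContinuousOn f (Icc a b)) (hc : ContinuousOn c (Icc a b))
    (hf' : ∀ x ∈ Ioo a b, HasDerivAt f (f' x) x)
    (hle : ∀ x ∈ Ioo a b, -(c x * ‖f x‖ ^ 2) ≤ ⟪f' x, f x⟫) :
    ‖f a‖ * exp (-∫ x in a..b, c x) ≤ ‖f b‖ := by
  have hsq := mul_exp_neg_integral_le_of_hasDerivAt (u := fun x => ‖f x‖ ^ 2)
    (c := fun x => 2 * c x) hab (hf.norm.pow 2) (continuousOn_const.mul hc)
    (fun x hx => (hf' x hx).norm_sq) fun x hx => by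
      rw [real_inner_comm]; linarith [hle x hx]
  have hexp : exp (-∫ x in a..b, 2 * c x) = exp (-∫ x in a..b, c x) ^ 2 := by
    rw [intervalIntegral.integral_const_mul, ← exp_nat_mul]
    push_cast
    ring_nf
  rw [← sq_le_sq₀ (by positivity) (norm_nonneg _), mul_pow, ← hexp]
  exact hsq

/-- Property P5, lower bound. A solution of the linear
time-varying system `ż = A(t)z` satisfies
`‖z(t)‖ ≥ ‖z(t₀)‖ · exp(-∫_{t₀}^t μ(-A(s)) ds)`. -/
theorem norm_ge_exp_neg_integral_logNorm {n : ℕ} (t₀ : ℝ)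
    (A : ℝ → EuclideanSpace ℝ (Fin n) →L[ℝ] EuclideanSpace ℝ (Fin n))
    (hA : ContinuousOn A (Set.Ici t₀))
    (z : ℝ → EuclideanSpace ℝ (Fin n))
    (hz : ∀ t, t₀ ≤ t → HasDerivAt z (A t (z t)) t) :
    ∀ t, t₀ ≤ t →
      ‖z t₀‖ * Real.exp (-∫ s in t₀..t, logNorm (-(A s))) ≤ ‖z t‖ := by
  intro t ht
  refine norm_mul_exp_neg_integral_le_of_hasDerivAt ht
    (fun x hx => (hz x hx.1).continuousAt.continuousWithinAt)
    (lipschitzWith_one_logNorm.continuous.comp_continuousOn (hA.neg.mono Icc_subset_Ici_self))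
    (fun x hx => hz x hx.1.le) fun x _ => ?_
  have hμ := real_inner_apply_self_le_logNorm_mul_sq (-(A x)) (z x)
  rw [neg_apply, inner_neg_left] at hμ
  linarith
end

section
/- Let E be a real normed vector space and A : E →L[ℝ] E a continuous linear map. Then the limit μ(A) := lim_{θ → 0⁺} (‖id + θ • A‖ − 1)/θ exists (as a real number), where ‖·‖ is the operator norm; moreover |μ(A)| ≤ ‖A‖. -/
/-!
The function `θ ↦ ‖x + θ • v‖` is convex, so its difference quotients at `0` decrease as
`θ ↓ 0` and it has a right derivative there; by the triangle inequality these quotients lie in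
`[-‖v‖, ‖v‖]`. The logarithmic norm is the case `x = id`, `v = A`, where `‖x‖ = 1`.
-/

open Filter Topology Set

section NormAlongLine

variable {F : Type*} [NormedAddCommGroup F] [NormedSpace ℝ F]

lemma convexOn_univ_norm_add_smul (x v : F) : ConvexOn ℝ univ (fun θ : ℝ => ‖x + θ • v‖) := by
  have hline : (fun θ : ℝ => ‖x + θ • v‖) = norm ∘ AffineMap.lineMap x (x + v) := by
    ext θ
    simp [AffineMap.lineMap_apply, add_comm]
  rw [hline, ← preimage_univ]
  exact convexOn_univ_norm.comp_affineMap _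

lemma abs_slope_norm_add_smul_le (x v : F) (θ : ℝ) :
    |slope (fun θ : ℝ => ‖x + θ • v‖) 0 θ| ≤ ‖v‖ := by
  rw [slope_def_field, sub_zero, zero_smul, add_zero, abs_div]
  rcases eq_or_ne θ 0 with rfl | hθ
  · simp
  rw [div_le_iff₀ (abs_pos.2 hθ)]
  calc |‖x + θ • v‖ - ‖x‖| ≤ ‖θ • v‖ := by simpa using abs_norm_sub_norm_le (x + θ • v) x
    _ = ‖v‖ * |θ| := by rw [norm_smul, Real.norm_eq_abs, mul_comm]

theorem exists_tendsto_norm_add_smul_sub_norm_div (x v : F) :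
    ∃ c : ℝ, |c| ≤ ‖v‖ ∧
      Tendsto (fun θ : ℝ => (‖x + θ • v‖ - ‖x‖) / θ) (𝓝[>] 0) (𝓝 c) := by
  have hderiv := (convexOn_univ_norm_add_smul x v).hasDerivWithinAt_sInf_slope_of_mem_interior
    (by simp : (0 : ℝ) ∈ interior univ)
  rw [hasDerivWithinAt_iff_tendsto_slope' (by simp)] at hderiv
  refine ⟨_, le_of_tendsto hderiv.abs (Eventually.of_forall (abs_slope_norm_add_smul_le x v)), ?_⟩
  convert hderiv using 2 with θ
  simp [slope_def_field]

end NormAlongLine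

/-- Property P1. For a bounded operator `A` on a real normed
space, the logarithmic norm `μ(A) = lim_{θ→0⁺} (‖id + θ•A‖ - 1)/θ` exists, and
`|μ(A)| ≤ ‖A‖`. -/
theorem logNorm_limit_exists {E : Type*} [NormedAddCommGroup E]
    [NormedSpace ℝ E] [Nontrivial E] (A : E →L[ℝ] E) :
    ∃ c : ℝ, |c| ≤ ‖A‖ ∧
      Tendsto (fun θ : ℝ => (‖ContinuousLinearMap.id ℝ E + θ • A‖ - 1) / θ)
        (𝓝[>] 0) (𝓝 c) := by
  simpa only [ContinuousLinearMap.norm_id] using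
    exists_tendsto_norm_add_smul_sub_norm_div (ContinuousLinearMap.id ℝ E) A
end

section
/- Let E be a real normed vector space and A, B : E →L[ℝ] E continuous linear maps whose logarithmic norms μ(A) and μ(B) exist (as limits lim_{θ→0⁺} (‖id + θ•M‖ − 1)/θ). Then |μ(A) − μ(B)| ≤ ‖A − B‖, where ‖·‖ is the operator norm. -/
open Filter Topology

/-- Property P3. If the logarithmic norms `μ(A)` and `μ(B)`
exist, then `|μ(A) - μ(B)| ≤ ‖A - B‖`. -/
theorem abs_logNorm_sub_le {E : Type*} [NormedAddCommGroup E]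
    [NormedSpace ℝ E] [Nontrivial E] (A B : E →L[ℝ] E) (μA μB : ℝ)
    (hA : Tendsto (fun θ : ℝ => (‖ContinuousLinearMap.id ℝ E + θ • A‖ - 1) / θ)
      (𝓝[>] 0) (𝓝 μA))
    (hB : Tendsto (fun θ : ℝ => (‖ContinuousLinearMap.id ℝ E + θ • B‖ - 1) / θ)
      (𝓝[>] 0) (𝓝 μB)) :
    |μA - μB| ≤ ‖A - B‖ := by
  have h : Tendsto (fun θ : ℝ =>
      |(‖ContinuousLinearMap.id ℝ E + θ • A‖ - 1) / θ -
       (‖ContinuousLinearMap.id ℝ E + θ • B‖ - 1) / θ|)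
      (𝓝[>] 0) (𝓝 |μA - μB|) := (hA.sub hB).abs
  refine le_of_tendsto h ?_
  filter_upwards [self_mem_nhdsWithin] with θ (hθ : 0 < θ)
  have key : |‖ContinuousLinearMap.id ℝ E + θ • A‖ - ‖ContinuousLinearMap.id ℝ E + θ • B‖|
      ≤ θ * ‖A - B‖ := by
    calc |‖ContinuousLinearMap.id ℝ E + θ • A‖ - ‖ContinuousLinearMap.id ℝ E + θ • B‖|
        ≤ ‖(ContinuousLinearMap.id ℝ E + θ • A) - (ContinuousLinearMap.id ℝ E + θ • B)‖ :=
          abs_norm_sub_norm_le _ _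
      _ = ‖θ • (A - B)‖ := by
          congr 1; rw [smul_sub]; abel
      _ = θ * ‖A - B‖ := (norm_smul θ (A - B)).trans (by rw [Real.norm_eq_abs, abs_of_pos hθ])
  rw [div_sub_div_same, abs_div, abs_of_pos hθ, div_le_iff₀ hθ]
  have : (‖ContinuousLinearMap.id ℝ E + θ • A‖ - 1) - (‖ContinuousLinearMap.id ℝ E + θ • B‖ - 1)
      = ‖ContinuousLinearMap.id ℝ E + θ • A‖ - ‖ContinuousLinearMap.id ℝ E + θ • B‖ := by ring
  rw [this]
  linarith [key, mul_comm θ ‖A - B‖ ▸ key]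
end

section
/- Let A be a real n×n matrix and P a real symmetric positive definite n×n matrix with positive definite square root P₀ = √P. Then sup over nonzero x ∈ ℝⁿ of [xᵀ(PA + AᵀP)x] / (2 xᵀPx) equals (1/2) λ_max(Â + Âᵀ), where Â = P₀ A P₀⁻¹ and λ_max denotes the largest eigenvalue of the real symmetric matrix Â + Âᵀ (the weighted logarithmic norm μ_P[A]). -/
/-!
Writing `Q = √P`, which is symmetric and invertible with `QᵀQ = P`, the substitution `y = Qx`
turns `xᵀ(PA + AᵀP)x` into `yᵀ(Â + Âᵀ)y` and `xᵀPx` into `yᵀy`, and it permutes the nonzero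
vectors. So the weighted logarithmic norm is half the supremum of the Rayleigh quotient of the
symmetric matrix `Â + Âᵀ`, which is its largest eigenvalue: the spectral theorem gives the upper
bound, and an eigenvector for the largest eigenvalue attains it.
-/

open Matrix
open scoped MatrixOrder

namespace Matrix

variable {m : Type*} [Fintype m]

lemma dotProduct_self_pos {R : Type*} [Ring R] [LinearOrder R] [IsStrictOrderedRing R]
    {v : m → R} (hv : v ≠ 0) : 0 < v ⬝ᵥ v :=
  (Finset.sum_nonneg fun i _ => mul_self_nonneg (v i)).lt_of_ne'
    (dotProduct_self_eq_zero.not.2 hv)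

lemma dotProduct_mulVec_transpose_mul_mul {R : Type*} [CommSemiring R] (B M : Matrix m m R)
    (x : m → R) : x ⬝ᵥ ((Bᵀ * M * B) *ᵥ x) = (B *ᵥ x) ⬝ᵥ (M *ᵥ (B *ᵥ x)) := by
  rw [← mulVec_mulVec, ← mulVec_mulVec, dotProduct_mulVec, vecMul_transpose]

variable [DecidableEq m]

lemma transpose_mul_conj_add_transpose_mul {R : Type*} [CommRing R] {Q : Matrix m m R}
    (hQ : IsUnit Q) (A : Matrix m m R) :
    Qᵀ * (Q * A * Q⁻¹ + (Q * A * Q⁻¹)ᵀ) * Q = Qᵀ * Q * A + Aᵀ * (Qᵀ * Q) := by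
  have hdet : IsUnit Q.det := (isUnit_iff_isUnit_det Q).1 hQ
  have hQQ : Q⁻¹ * Q = 1 := nonsing_inv_mul Q hdet
  have hQQt : Qᵀ * Q⁻¹ᵀ = 1 := by rw [← transpose_mul, hQQ, transpose_one]
  rw [transpose_mul, transpose_mul]
  simp only [mul_add, add_mul, Matrix.mul_assoc, hQQ, Matrix.mul_one]
  simp only [← Matrix.mul_assoc, hQQt, Matrix.one_mul]

lemma iSup_ne_zero_comp_mulVec {K ι : Type*} [Field K] [SupSet ι] {B : Matrix m m K}
    (hB : IsUnit B) (f : (m → K) → ι) :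
    ⨆ x : {x : m → K // x ≠ 0}, f (B *ᵥ x) = ⨆ y : {y : m → K // y ≠ 0}, f y := by
  have hinj : Function.Injective (B *ᵥ ·) := mulVec_injective_iff_isUnit.2 hB
  have hsurj : Function.Surjective (B *ᵥ ·) := mulVec_surjective_iff_isUnit.2 hB
  let e : {x : m → K // x ≠ 0} → {y : m → K // y ≠ 0} :=
    fun x => ⟨B *ᵥ x, fun h => x.2 (hinj (h.trans (mulVec_zero B).symm))⟩
  refine Function.Surjective.iSup_comp (f := e) ?_ fun y => f y.1
  rintro ⟨y, hy⟩
  obtain ⟨x, rfl⟩ := hsurj y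
  exact ⟨⟨x, by rintro rfl; exact hy (mulVec_zero B)⟩, rfl⟩

lemma transpose_sqrt (P : Matrix m m ℝ) : (CFC.sqrt P)ᵀ = CFC.sqrt P := by
  simpa only [IsHermitian, conjTranspose_eq_transpose_of_trivial] using
    (CFC.sqrt_nonneg P).posSemidef.isHermitian

namespace IsHermitian

variable {S : Matrix m m ℝ} (hS : S.IsHermitian)
include hS

lemma dotProduct_mulVec_le_iSup_eigenvalues_mul (y : m → ℝ) :
    y ⬝ᵥ (S *ᵥ y) ≤ (⨆ i, hS.eigenvalues i) * (y ⬝ᵥ y) := by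
  set U := (hS.eigenvectorUnitary : Matrix m m ℝ)
  have hUt : (star U)ᵀ = U := by
    rw [star_eq_conjTranspose, conjTranspose_eq_transpose_of_trivial, transpose_transpose]
  have hU : (star U)ᵀ * 1 * star U = 1 := by
    rw [hUt, Matrix.mul_one, Unitary.mul_star_self_of_mem hS.eigenvectorUnitary.2]
  have hSU : (star U)ᵀ * diagonal hS.eigenvalues * star U = S := by
    conv_rhs => rw [hS.spectral_theorem, Unitary.conjStarAlgAut_apply]
    rw [hUt]
    rfl
  set z := star U *ᵥ y
  have hz : y ⬝ᵥ (S *ᵥ y) = z ⬝ᵥ (diagonal hS.eigenvalues *ᵥ z) := by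
    rw [← dotProduct_mulVec_transpose_mul_mul, hSU]
  have hzz : y ⬝ᵥ y = z ⬝ᵥ z := by
    simpa only [hU, one_mulVec] using dotProduct_mulVec_transpose_mul_mul (star U) 1 y
  rw [hz, hzz]
  simp only [dotProduct, mulVec_diagonal, Finset.mul_sum]
  refine Finset.sum_le_sum fun i _ => ?_
  have hi : hS.eigenvalues i ≤ ⨆ j, hS.eigenvalues j := le_ciSup (Finite.bddAbove_range _) i
  nlinarith [mul_self_nonneg (z i)]

lemma eigenvectorBasis_dotProduct_self (i : m) :
    ⇑(hS.eigenvectorBasis i) ⬝ᵥ ⇑(hS.eigenvectorBasis i) = 1 := by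
  have h := real_inner_self_eq_norm_sq (hS.eigenvectorBasis i)
  rwa [hS.eigenvectorBasis.orthonormal.1 i, one_pow, EuclideanSpace.inner_eq_star_dotProduct,
    star_trivial] at h

theorem iSup_rayleigh_eq_iSup_eigenvalues :
    ⨆ y : {y : m → ℝ // y ≠ 0}, y.1 ⬝ᵥ (S *ᵥ y.1) / (y.1 ⬝ᵥ y.1) = ⨆ i, hS.eigenvalues i := by
  cases isEmpty_or_nonempty m with
  | inl hm =>
    have : IsEmpty {y : m → ℝ // y ≠ 0} := ⟨fun y => y.2 (Subsingleton.elim _ _)⟩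
    rw [Real.iSup_of_isEmpty, Real.iSup_of_isEmpty]
  | inr hm =>
    obtain ⟨i, hi⟩ := exists_eq_ciSup_of_finite (f := hS.eigenvalues)
    have hle : ∀ y : {y : m → ℝ // y ≠ 0},
        y.1 ⬝ᵥ (S *ᵥ y.1) / (y.1 ⬝ᵥ y.1) ≤ ⨆ i, hS.eigenvalues i := fun y =>
      (div_le_iff₀ (dotProduct_self_pos y.2)).2 (hS.dotProduct_mulVec_le_iSup_eigenvalues_mul y)
    have hv := hS.eigenvectorBasis_dotProduct_self i
    have hv0 : ⇑(hS.eigenvectorBasis i) ≠ 0 := fun h => by simp [h] at hv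
    have : Nonempty {y : m → ℝ // y ≠ 0} := ⟨⟨_, hv0⟩⟩
    refine le_antisymm (ciSup_le hle) (le_ciSup_of_le ⟨_, Set.forall_mem_range.2 hle⟩ ⟨_, hv0⟩ ?_)
    rw [hS.mulVec_eigenvectorBasis, dotProduct_smul, hv, hi, smul_eq_mul, mul_one, div_one]

end IsHermitian

end Matrix

theorem weighted_logNorm_eq_half_lambdaMax_general {n : ℕ}
    (A P : Matrix (Fin n) (Fin n) ℝ) (hP : P.PosDef) (hH : (CFC.sqrt P * A * (CFC.sqrt P)⁻¹ +
        (CFC.sqrt P * A * (CFC.sqrt P)⁻¹)ᵀ).IsHermitian) :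
    (⨆ x : {x : Fin n → ℝ // x ≠ 0},
        (x.1 ⬝ᵥ ((P * A + Aᵀ * P) *ᵥ x.1)) / (2 * (x.1 ⬝ᵥ (P *ᵥ x.1)))) =
      (1 / 2) * ⨆ i, hH.eigenvalues i := by
  set Q := CFC.sqrt P
  set S := Q * A * Q⁻¹ + (Q * A * Q⁻¹)ᵀ
  have hQ : IsUnit Q := (CFC.isUnit_sqrt_iff P hP.posSemidef.nonneg).2 hP.isUnit
  have hPQ : Qᵀ * Q = P := by rw [transpose_sqrt, CFC.sqrt_mul_sqrt_self P hP.posSemidef.nonneg]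
  have hnum (x : Fin n → ℝ) : x ⬝ᵥ ((P * A + Aᵀ * P) *ᵥ x) = (Q *ᵥ x) ⬝ᵥ (S *ᵥ (Q *ᵥ x)) := by
    rw [← dotProduct_mulVec_transpose_mul_mul, transpose_mul_conj_add_transpose_mul hQ, hPQ]
  have hden (x : Fin n → ℝ) : x ⬝ᵥ (P *ᵥ x) = (Q *ᵥ x) ⬝ᵥ (Q *ᵥ x) := by
    simpa only [Matrix.mul_one, hPQ, one_mulVec] using dotProduct_mulVec_transpose_mul_mul Q 1 x
  calc _ = ⨆ x : {x : Fin n → ℝ // x ≠ 0},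
          (Q *ᵥ x.1) ⬝ᵥ (S *ᵥ (Q *ᵥ x.1)) / (2 * ((Q *ᵥ x.1) ⬝ᵥ (Q *ᵥ x.1))) := by
        simp only [hnum, hden]
    _ = ⨆ y : {y : Fin n → ℝ // y ≠ 0}, y.1 ⬝ᵥ (S *ᵥ y.1) / (2 * (y.1 ⬝ᵥ y.1)) :=
        iSup_ne_zero_comp_mulVec hQ fun y => y ⬝ᵥ (S *ᵥ y) / (2 * (y ⬝ᵥ y))
    _ = ⨆ y : {y : Fin n → ℝ // y ≠ 0}, 1 / 2 * (y.1 ⬝ᵥ (S *ᵥ y.1) / (y.1 ⬝ᵥ y.1)) := by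
        congr! 2 with y
        ring
    _ = 1 / 2 * ⨆ i, hH.eigenvalues i := by
        rw [← Real.mul_iSup_of_nonneg (by norm_num), hH.iSup_rayleigh_eq_iSup_eigenvalues]

/-- weighted logarithmic norm `μ_P[A]`. For `P` symmetric
positive definite with positive definite square root `P₀ = √P`,
`sup_{x ≠ 0} xᵀ(PA + AᵀP)x / (2 xᵀPx) = (1/2) λ_max(Â + Âᵀ)` where
`Â = P₀ A P₀⁻¹`. -/
theorem weighted_logNorm_eq_half_lambdaMax {n : ℕ} (hn : 1 ≤ n)
    (A P : Matrix (Fin n) (Fin n) ℝ) (hP : P.PosDef) (hPsym : P.IsSymm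
    ) (hH : (CFC.sqrt P * A * (CFC.sqrt P)⁻¹ +
        (CFC.sqrt P * A * (CFC.sqrt P)⁻¹)ᵀ).IsHermitian) :
    (⨆ x : {x : Fin n → ℝ // x ≠ 0},
        (x.1 ⬝ᵥ ((P * A + Aᵀ * P) *ᵥ x.1)) / (2 * (x.1 ⬝ᵥ (P *ᵥ x.1)))) =
      (1 / 2) * ⨆ i, hH.eigenvalues i :=
  weighted_logNorm_eq_half_lambdaMax_general A P hP hH
end

section
/- (Demidovich criterion.) Let F : ℝⁿ × ℝ → ℝⁿ be continuously differentiable in its first (state) variable and continuous in its second (time) variable. Suppose there exist a real symmetric positive definite n×n matrix P and β > 0 such that for all x ∈ ℝⁿ, t ∈ ℝ, and v ∈ ℝⁿ, vᵀ(P · DₓF(x,t) + DₓF(x,t)ᵀ · P) v ≤ −β ‖v‖² (uniform negative definiteness of (1/2)(P J + JᵀP)). Then there exist constants K > 0 and α > 0, independent of the solutions, such that for any two differentiable functions x, x* : [t₀,∞) → ℝⁿ with x'(t) = F(x(t),t) and x*'(t) = F(x*(t),t) for all t ≥ t₀, one has ‖x(t) − x*(t)‖ ≤ K e^{−α(t−t₀)}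 ‖x(t₀) − x*(t₀)‖ for all t ≥ t₀ (Euclidean norm). -/
open Filter Topology Matrix

/-- The Jacobian matrix of `y ↦ F y t` at `x`. -/
noncomputable def jacobianMatrix {n : ℕ}
    (F : EuclideanSpace ℝ (Fin n) → ℝ → EuclideanSpace ℝ (Fin n))
    (x : EuclideanSpace ℝ (Fin n)) (t : ℝ) : Matrix (Fin n) (Fin n) ℝ :=
  Matrix.of fun i j => (fderiv ℝ (fun y => F y t) x) (EuclideanSpace.single j 1) i

/-!
With `T` the operator of `P`, the Lyapunov function `V(e) = ⟪T e, e⟫` is equivalent to `‖e‖²`: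
`m‖e‖² ≤ V(e) ≤ M‖e‖²`. The Jacobian condition and the mean value theorem on `[b, a]` give the
one-sided estimate `⟪T (F a t - F b t), a - b⟫ ≤ -(β/2)‖a - b‖²`, so along the difference `e` of
two solutions `V(e)' ≤ -β‖e‖² ≤ -(β/M) V(e)`. Grönwall makes `V(e)` decay like `exp(-(β/M)t)`, and
the norm equivalence turns this into the claimed bound with `K = √(M/m)`, `α = β/(2M)`.
-/

open Set Real
open scoped RealInnerProductSpace

section InnerProductSpace

variable {E : Type*} [NormedAddCommGroup E] [InnerProductSpace ℝ E]

theorem exists_pos_mul_sq_norm_le_inner_self [FiniteDimensional ℝ E] (T : E →L[ℝ] E)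
    (hT : ∀ w ≠ 0, 0 < ⟪T w, w⟫) : ∃ m > 0, ∀ w, m * ‖w‖ ^ 2 ≤ ⟪T w, w⟫ := by
  rcases subsingleton_or_nontrivial E with _ | _
  · exact ⟨1, one_pos, fun w => by simp [Subsingleton.elim w 0]⟩
  have hcont : Continuous fun w => ⟪T w, w⟫ := by fun_prop
  obtain ⟨u₀, hu₀, hmin⟩ := (isCompact_sphere (0 : E) 1).exists_isMinOn
    (NormedSpace.sphere_nonempty.mpr zero_le_one) hcont.continuousOn
  refine ⟨⟪T u₀, u₀⟫, hT u₀ (ne_zero_of_mem_unit_sphere ⟨u₀, hu₀⟩), fun w => ?_⟩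
  rcases eq_or_ne w 0 with rfl | hw
  · simp
  have hw' : ‖w‖ ≠ 0 := norm_ne_zero_iff.mpr hw
  have hu : ‖w‖⁻¹ • w ∈ Metric.sphere (0 : E) 1 := by
    simp [norm_smul, hw']
  calc ⟪T u₀, u₀⟫ * ‖w‖ ^ 2 ≤ ⟪T (‖w‖⁻¹ • w), ‖w‖⁻¹ • w⟫ * ‖w‖ ^ 2 := by
        gcongr; exact hmin hu
    _ = ⟪T w, w⟫ := by
        simp only [map_smul, inner_smul_left, inner_smul_right, conj_trivial]
        field_simp

theorem IsSelfAdjoint.inner_mul_add_star_mul_apply [CompleteSpace E] {T : E →L[ℝ] E}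
    (hT : IsSelfAdjoint T) (L : E →L[ℝ] E) (v : E) :
    ⟪v, (T * L + star L * T) v⟫ = 2 * ⟪T (L v), v⟫ := by
  simp only [_root_.add_apply, mul_apply_eq_comp, inner_add_right,
    ContinuousLinearMap.star_eq_adjoint, ContinuousLinearMap.adjoint_inner_right]
  rw [real_inner_comm _ v, show ⟪T (L v), v⟫ = ⟪L v, T v⟫ from hT.isSymmetric _ _]
  ring

theorem HasDerivAt.inner_apply_self [CompleteSpace E] {T : E →L[ℝ] E} (hT : IsSelfAdjoint T)
    {e : ℝ → E} {e' : E} {τ : ℝ} (he : HasDerivAt e e' τ) :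
    HasDerivAt (fun s => ⟪T (e s), e s⟫) (2 * ⟪T e', e τ⟫) τ := by
  refine ((T.hasFDerivAt.comp_hasDerivAt τ he).inner ℝ he).congr_deriv ?_
  rw [Function.comp_apply, show ⟪T e', e τ⟫ = ⟪e', T (e τ)⟫ from hT.isSymmetric _ _,
    real_inner_comm e']
  ring

theorem inner_apply_sub_le_of_inner_fderiv_le {f : E → E} (hf : Differentiable ℝ f)
    (T : E →L[ℝ] E) {γ : ℝ} (h : ∀ x v, ⟪T (fderiv ℝ f x v), v⟫ ≤ -γ * ‖v‖ ^ 2) (a b : E) :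
    ⟪T (f a - f b), a - b⟫ ≤ -γ * ‖a - b‖ ^ 2 := by
  set e := a - b
  let φ : ℝ → ℝ := fun s => ⟪T (f (b + s • e)), e⟫ + γ * s * ‖e‖ ^ 2
  have hφ : ∀ s, HasDerivAt φ (⟪T (fderiv ℝ f (b + s • e) e), e⟫ + γ * ‖e‖ ^ 2) s := by
    intro s
    have hline : HasDerivAt (fun s : ℝ => b + s • e) e s := by
      simpa using ((hasDerivAt_id s).smul_const e).const_add b
    have hTf := ((T.hasFDerivAt.comp _ (hf _).hasFDerivAt).comp_hasDerivAt s hline).inner ℝ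
      (hasDerivAt_const s e)
    refine (hTf.add ((hasDerivAt_id s).const_mul γ |>.mul_const _)).congr_deriv ?_
    simp
  have hφ_anti : φ 1 ≤ φ 0 := antitone_of_hasDerivAt_nonpos hφ
    (fun s => by simp only [Pi.zero_apply]; linarith [h (b + s • e) e]) zero_le_one
  simp only [φ, one_smul, zero_smul, add_zero, mul_one, mul_zero, zero_mul, e,
    add_sub_cancel] at hφ_anti
  rw [map_sub, inner_sub_left]
  linarith

theorem le_mul_exp_of_hasDerivAt_le_neg_mul {V V' : ℝ → ℝ} {c t₀ t : ℝ}
    (hV : ∀ τ ∈ Icc t₀ t, HasDerivAt V (V' τ) τ) (hV' : ∀ τ ∈ Ico t₀ t, V' τ ≤ -c * V τ)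
    (ht : t₀ ≤ t) : V t ≤ V t₀ * exp (-c * (t - t₀)) := by
  have := le_gronwallBound_of_liminf_deriv_right_le (f := V) (f' := V') (K := -c) (ε := 0)
    (fun τ hτ => (hV τ hτ).continuousAt.continuousWithinAt)
    (fun τ hτ r hr => (hV τ (Ico_subset_Icc_self hτ)).hasDerivWithinAt.liminf_right_slope_le hr)
    le_rfl (fun τ hτ => by rw [add_zero]; exact hV' τ hτ) t ⟨ht, le_rfl⟩
  rwa [gronwallBound_ε0] at this

theorem norm_sub_le_mul_exp_of_inner_sub_le [CompleteSpace E] {T : E →L[ℝ] E} (hT : IsSelfAdjoint T)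
    {m M γ : ℝ} (hm : 0 < m) (hM : 0 < M) (hγ : 0 ≤ γ)
    (hlow : ∀ w, m * ‖w‖ ^ 2 ≤ ⟪T w, w⟫) (hup : ∀ w, ⟪T w, w⟫ ≤ M * ‖w‖ ^ 2)
    {G : E → ℝ → E} (hG : ∀ a b t, ⟪T (G a t - G b t), a - b⟫ ≤ -γ * ‖a - b‖ ^ 2)
    {x y : ℝ → E} {t₀ t : ℝ} (hx : ∀ τ, t₀ ≤ τ → HasDerivAt x (G (x τ) τ) τ)
    (hy : ∀ τ, t₀ ≤ τ → HasDerivAt y (G (y τ) τ) τ) (ht : t₀ ≤ t) :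
    ‖x t - y t‖ ≤ √(M / m) * exp (-(γ / M) * (t - t₀)) * ‖x t₀ - y t₀‖ := by
  set V := fun τ => ⟪T (x τ - y τ), x τ - y τ⟫
  have hV : ∀ τ ∈ Icc t₀ t, HasDerivAt V (2 * ⟪T (G (x τ) τ - G (y τ) τ), x τ - y τ⟫) τ :=
    fun τ hτ => ((hx τ hτ.1).sub (hy τ hτ.1)).inner_apply_self hT
  have hV' : ∀ τ ∈ Ico t₀ t,
      2 * ⟪T (G (x τ) τ - G (y τ) τ), x τ - y τ⟫ ≤ -(2 * γ / M) * V τ := by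
    intro τ _
    have hVle : 2 * γ / M * V τ ≤ 2 * γ * ‖x τ - y τ‖ ^ 2 := by
      rw [div_mul_eq_mul_div, div_le_iff₀ hM]
      nlinarith [hup (x τ - y τ)]
    linarith [hG (x τ) (y τ) τ]
  have hdecay := le_mul_exp_of_hasDerivAt_le_neg_mul hV hV' ht
  have hsq : m * ‖x t - y t‖ ^ 2 ≤
      m * (√(M / m) * exp (-(γ / M) * (t - t₀)) * ‖x t₀ - y t₀‖) ^ 2 :=
    calc m * ‖x t - y t‖ ^ 2 ≤ V t := hlow _
      _ ≤ V t₀ * exp (-(2 * γ / M) * (t - t₀)) := hdecay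
      _ ≤ M * ‖x t₀ - y t₀‖ ^ 2 * exp (-(2 * γ / M) * (t - t₀)) := by gcongr; exact hup _
      _ = m * (√(M / m) * exp (-(γ / M) * (t - t₀)) * ‖x t₀ - y t₀‖) ^ 2 := by
        rw [mul_pow, mul_pow, sq_sqrt (by positivity), ← exp_nat_mul]
        field_simp
        ring_nf
  exact (pow_le_pow_iff_left₀ (norm_nonneg _) (by positivity) two_ne_zero).mp
    (le_of_mul_le_mul_left hsq hm)

end InnerProductSpace

theorem toEuclideanCLM_of_apply_single {ι : Type*} [Fintype ι] [DecidableEq ι]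
    (L : EuclideanSpace ℝ ι →L[ℝ] EuclideanSpace ℝ ι) :
    toEuclideanCLM (𝕜 := ℝ) (Matrix.of fun i j => L (EuclideanSpace.single j 1) i) = L := by
  apply EquivLike.injective (toEuclideanCLM (n := ι) (𝕜 := ℝ)).symm
  rw [StarAlgEquiv.symm_apply_apply]
  ext i j
  change _ = LinearMap.toMatrixOrthonormal (EuclideanSpace.basisFun ι ℝ) (L : _ →ₗ[ℝ] _) i j
  simp [LinearMap.toMatrixOrthonormal_apply_apply, EuclideanSpace.inner_single_left]

theorem toEuclideanCLM_jacobianMatrix {n : ℕ}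
    (F : EuclideanSpace ℝ (Fin n) → ℝ → EuclideanSpace ℝ (Fin n)) (x : EuclideanSpace ℝ (Fin n))
    (t : ℝ) : toEuclideanCLM (𝕜 := ℝ) (jacobianMatrix F x t) = fderiv ℝ (fun y => F y t) x :=
  toEuclideanCLM_of_apply_single _

theorem Matrix.IsHermitian.dotProduct_mul_add_transpose_mul_mulVec {ι : Type*} [Fintype ι]
    [DecidableEq ι] {P : Matrix ι ι ℝ} (hP : P.IsHermitian) (J : Matrix ι ι ℝ)
    (v : EuclideanSpace ℝ ι) :
    v ⬝ᵥ ((P * J + Jᵀ * P) *ᵥ v) =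
      2 * ⟪toEuclideanCLM (𝕜 := ℝ) P (toEuclideanCLM (𝕜 := ℝ) J v), v⟫ := by
  rw [← inner_toEuclideanCLM, ← conjTranspose_eq_transpose_of_trivial, ← star_eq_conjTranspose,
    map_add, map_mul, map_mul, map_star]
  exact (hP.isSelfAdjoint.map _).inner_mul_add_star_mul_apply _ v

theorem demidovich_criterion_general {n : ℕ}
    (F : EuclideanSpace ℝ (Fin n) → ℝ → EuclideanSpace ℝ (Fin n))
    (hF : ∀ t : ℝ, ContDiff ℝ 1 (fun y => F y t))
    (P : Matrix (Fin n) (Fin n) ℝ) (hP : P.PosDef)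
    (β : ℝ) (hβ : 0 < β)
    (hJ : ∀ (x : EuclideanSpace ℝ (Fin n)) (t : ℝ) (v : Fin n → ℝ),
      v ⬝ᵥ ((P * jacobianMatrix F x t + (jacobianMatrix F x t)ᵀ * P) *ᵥ v) ≤
        -β * ‖(EuclideanSpace.equiv (Fin n) ℝ).symm v‖ ^ 2) :
    ∃ K > 0, ∃ α > 0, ∀ (t₀ : ℝ) (x xs : ℝ → EuclideanSpace ℝ (Fin n)),
      (∀ t, t₀ ≤ t → HasDerivAt x (F (x t) t) t) →
      (∀ t, t₀ ≤ t → HasDerivAt xs (F (xs t) t) t) →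
      ∀ t, t₀ ≤ t →
        ‖x t - xs t‖ ≤ K * Real.exp (-α * (t - t₀)) * ‖x t₀ - xs t₀‖ := by
  set T := toEuclideanCLM (𝕜 := ℝ) P
  have hT : IsSelfAdjoint T := hP.isHermitian.isSelfAdjoint.map _
  obtain ⟨m, hm, hlow⟩ := exists_pos_mul_sq_norm_le_inner_self T fun w hw => by
    simpa [T, inner_toEuclideanCLM, real_inner_comm] using
      hP.dotProduct_mulVec_pos (x := WithLp.ofLp w) (by simpa using hw)
  obtain ⟨M, hM, hTM⟩ := T.bound
  have hup : ∀ w, ⟪T w, w⟫ ≤ M * ‖w‖ ^ 2 := fun w =>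
    calc ⟪T w, w⟫ ≤ ‖T w‖ * ‖w‖ := real_inner_le_norm _ _
      _ ≤ M * ‖w‖ * ‖w‖ := by gcongr; exact hTM w
      _ = M * ‖w‖ ^ 2 := by ring
  have hDF : ∀ t x v, ⟪T (fderiv ℝ (fun y => F y t) x v), v⟫ ≤ -(β / 2) * ‖v‖ ^ 2 := by
    intro t x v
    have hquad := hJ x t v
    rw [hP.isHermitian.dotProduct_mul_add_transpose_mul_mulVec,
      toEuclideanCLM_jacobianMatrix] at hquad
    change 2 * ⟪T _, v⟫ ≤ -β * ‖v‖ ^ 2 at hquad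
    linarith
  refine ⟨√(M / m), by positivity, β / 2 / M, by positivity, fun t₀ x xs hx hxs t ht => ?_⟩
  exact norm_sub_le_mul_exp_of_inner_sub_le hT hm hM (by positivity) hlow hup
    (fun a b t => inner_apply_sub_le_of_inner_fderiv_le ((hF t).differentiable one_ne_zero) T
      (hDF t) a b) hx hxs ht

/-- Demidovich criterion. If for some symmetric positive
definite `P` and `β > 0` the matrix `P·DₓF + DₓFᵀ·P` satisfies
`vᵀ(P J + Jᵀ P)v ≤ -β‖v‖²` uniformly in `(x,t)`, then there are `K, α > 0` such
that any two solutions of `ẋ = F(x,t)` satisfy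
`‖x(t) - x*(t)‖ ≤ K e^{-α(t-t₀)} ‖x(t₀) - x*(t₀)‖` in the Euclidean norm. -/
theorem demidovich_criterion {n : ℕ} (hn : 1 ≤ n)
    (F : EuclideanSpace ℝ (Fin n) → ℝ → EuclideanSpace ℝ (Fin n))
    (hF : ∀ t : ℝ, ContDiff ℝ 1 (fun y => F y t))
    (hFt : ∀ y, Continuous (fun t => F y t))
    (P : Matrix (Fin n) (Fin n) ℝ) (hP : P.PosDef) (hPsym : P.IsSymm)
    (β : ℝ) (hβ : 0 < β)
    (hJ : ∀ (x : EuclideanSpace ℝ (Fin n)) (t : ℝ) (v : Fin n → ℝ),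
      v ⬝ᵥ ((P * jacobianMatrix F x t + (jacobianMatrix F x t)ᵀ * P) *ᵥ v) ≤
        -β * ‖(EuclideanSpace.equiv (Fin n) ℝ).symm v‖ ^ 2) :
    ∃ K > 0, ∃ α > 0, ∀ (t₀ : ℝ) (x xs : ℝ → EuclideanSpace ℝ (Fin n)),
      (∀ t, t₀ ≤ t → HasDerivAt x (F (x t) t) t) →
      (∀ t, t₀ ≤ t → HasDerivAt xs (F (xs t) t) t) →
      ∀ t, t₀ ≤ t →
        ‖x t - xs t‖ ≤ K * Real.exp (-α * (t - t₀)) * ‖x t₀ - xs t₀‖ :=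
  demidovich_criterion_general F hF P hP β hβ hJ
end

section
/- Let α₀ > 0, let α, m : [t₀,∞) → ℝ be continuous with m(t) ≤ −α(t) ≤ −α₀ for all t ≥ t₀, and let g : [t₀,∞) → ℝⁿ be continuous with ‖g(t)‖/α(t) → 0 as t → ∞. Then ∫_{t₀}^{t} exp(∫_{τ}^{t} m(s) ds) ‖g(τ)‖ dτ → 0 as t → ∞. -/
/-!
Split the integral at a time `T` after which `‖g τ‖ ≤ ε α τ ≤ ε (-m τ)`. On `[T, t]` the integrand
is then at most `ε` times `-m τ * exp (∫ s in τ..t, m s)`, which is the derivative of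
`τ ↦ exp (∫ s in τ..t, m s)`, so this piece is at most `ε (1 - exp (∫ s in T..t, m s)) ≤ ε`.
On `[t₀, T]` the kernel is at most `exp (-α₀ (t - T))`, so that piece decays exponentially.
-/

open Filter Topology Set Real intervalIntegral MeasureTheory

section ExpIntegralKernel

variable {m f : ℝ → ℝ} {a b : ℝ}

theorem continuousOn_exp_integral_left (hab : a ≤ b) (hm : ContinuousOn m (Icc a b)) :
    ContinuousOn (fun τ => exp (∫ s in τ..b, m s)) (Icc a b) := by
  have h := continuousOn_primitive_interval_left (μ := volume)
    (by rw [uIcc_of_le hab]; exact hm.integrableOn_Icc)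
  rw [uIcc_of_le hab] at h
  exact continuous_exp.comp_continuousOn h

theorem hasDerivAt_exp_integral_left (hm : ContinuousOn m (Icc a b)) {τ : ℝ}
    (hτ : τ ∈ Ioo a b) :
    HasDerivAt (fun x => exp (∫ s in x..b, m s)) (-m τ * exp (∫ s in τ..b, m s)) τ := by
  have hmτ : IntervalIntegrable m volume τ b :=
    (hm.mono (Icc_subset_Icc_left hτ.1.le)).intervalIntegrable_of_Icc hτ.2.le
  have hderiv := integral_hasDerivAt_left hmτ
    ((hm.mono Ioo_subset_Icc_self).stronglyMeasurableAtFilter isOpen_Ioo τ hτ)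
    (hm.continuousAt (Icc_mem_nhds hτ.1 hτ.2))
  simpa only [mul_comm] using hderiv.exp

theorem integral_neg_mul_exp_integral (hab : a ≤ b) (hm : ContinuousOn m (Icc a b)) :
    ∫ τ in a..b, -m τ * exp (∫ s in τ..b, m s) = 1 - exp (∫ s in a..b, m s) := by
  have hint : IntervalIntegrable (fun τ => -m τ * exp (∫ s in τ..b, m s)) volume a b :=
    (hm.neg.mul (continuousOn_exp_integral_left hab hm)).intervalIntegrable_of_Icc hab
  rw [integral_eq_sub_of_hasDerivAt_of_le hab (continuousOn_exp_integral_left hab hm)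
    (fun τ hτ => hasDerivAt_exp_integral_left hm hτ) hint, integral_same, exp_zero]

theorem integral_le_neg_mul_of_le {c : ℝ} (hab : a ≤ b) (hm : IntervalIntegrable m volume a b)
    (hmc : ∀ s ∈ Icc a b, m s ≤ -c) : ∫ s in a..b, m s ≤ -c * (b - a) := by
  simpa [mul_comm] using integral_mono_on hab hm intervalIntegrable_const hmc

theorem integral_exp_integral_mul_le_of_le_mul_neg {ε : ℝ} (hab : a ≤ b)
    (hm : ContinuousOn m (Icc a b)) (hf : ContinuousOn f (Icc a b)) (hε : 0 ≤ ε)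
    (hfm : ∀ τ ∈ Icc a b, f τ ≤ ε * -m τ) :
    ∫ τ in a..b, exp (∫ s in τ..b, m s) * f τ ≤ ε := by
  have hK := continuousOn_exp_integral_left hab hm
  calc ∫ τ in a..b, exp (∫ s in τ..b, m s) * f τ
      ≤ ∫ τ in a..b, ε * (-m τ * exp (∫ s in τ..b, m s)) := by
        refine integral_mono_on hab ((hK.mul hf).intervalIntegrable_of_Icc hab)
          ((continuousOn_const.mul (hm.neg.mul hK)).intervalIntegrable_of_Icc hab) fun τ hτ => ?_
        calc exp (∫ s in τ..b, m s) * f τ ≤ exp (∫ s in τ..b, m s) * (ε * -m τ) :=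
              mul_le_mul_of_nonneg_left (hfm τ hτ) (exp_pos _).le
          _ = ε * (-m τ * exp (∫ s in τ..b, m s)) := by ring
    _ = ε * (1 - exp (∫ s in a..b, m s)) := by
        rw [intervalIntegral.integral_const_mul, integral_neg_mul_exp_integral hab hm]
    _ ≤ ε := by nlinarith [exp_pos (∫ s in a..b, m s)]

theorem integral_exp_integral_mul_le_exp_mul {c T : ℝ} (haT : a ≤ T) (hTb : T ≤ b)
    (hm : ContinuousOn m (Icc a b)) (hf : ContinuousOn f (Icc a T))
    (hf₀ : ∀ τ ∈ Icc a T, 0 ≤ f τ) (hc : 0 ≤ c) (hmc : ∀ s ∈ Icc a b, m s ≤ -c) :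
    ∫ τ in a..T, exp (∫ s in τ..b, m s) * f τ ≤ exp (-(c * (b - T))) * ∫ τ in a..T, f τ := by
  have hK := (continuousOn_exp_integral_left (haT.trans hTb) hm).mono (Icc_subset_Icc_right hTb)
  rw [← intervalIntegral.integral_const_mul]
  refine integral_mono_on haT ((hK.mul hf).intervalIntegrable_of_Icc haT)
    ((continuousOn_const.mul hf).intervalIntegrable_of_Icc haT) fun τ hτ => ?_
  have hτb : τ ≤ b := hτ.2.trans hTb
  have hinner : ∫ s in τ..b, m s ≤ -c * (b - τ) :=
    integral_le_neg_mul_of_le hτb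
      ((hm.mono (Icc_subset_Icc_left hτ.1)).intervalIntegrable_of_Icc hτb)
      fun s hs => hmc s ⟨hτ.1.trans hs.1, hs.2⟩
  refine mul_le_mul_of_nonneg_right (exp_le_exp.2 ?_) (hf₀ τ hτ)
  nlinarith [hτ.2]

theorem integral_exp_integral_mul_le {c ε T : ℝ} (haT : a ≤ T) (hTb : T ≤ b)
    (hm : ContinuousOn m (Icc a b)) (hf : ContinuousOn f (Icc a b))
    (hf₀ : ∀ τ ∈ Icc a T, 0 ≤ f τ) (hc : 0 ≤ c) (hmc : ∀ s ∈ Icc a b, m s ≤ -c) (hε : 0 ≤ ε)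
    (hfm : ∀ τ ∈ Icc T b, f τ ≤ ε * -m τ) :
    ∫ τ in a..b, exp (∫ s in τ..b, m s) * f τ ≤
      exp (-(c * (b - T))) * (∫ τ in a..T, f τ) + ε := by
  have hint : IntervalIntegrable (fun τ => exp (∫ s in τ..b, m s) * f τ) volume a b :=
    ((continuousOn_exp_integral_left (haT.trans hTb) hm).mul hf).intervalIntegrable_of_Icc
      (haT.trans hTb)
  rw [← integral_add_adjacent_intervals (hint.mono_set _) (hint.mono_set _)]
  · exact add_le_add
      (integral_exp_integral_mul_le_exp_mul haT hTb hm (hf.mono (Icc_subset_Icc_right hTb))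
        hf₀ hc hmc)
      (integral_exp_integral_mul_le_of_le_mul_neg hTb (hm.mono (Icc_subset_Icc_left haT))
        (hf.mono (Icc_subset_Icc_left haT)) hε hfm)
  · rw [uIcc_of_le haT, uIcc_of_le (haT.trans hTb)]; exact Icc_subset_Icc_right hTb
  · rw [uIcc_of_le hTb, uIcc_of_le (haT.trans hTb)]; exact Icc_subset_Icc_left haT

end ExpIntegralKernel

theorem Filter.Tendsto.eventually_le_const_mul_of_div {α : Type*} {l : Filter α} {u v : α → ℝ}
    (h : Tendsto (fun x => u x / v x) l (𝓝 0)) (hv : ∀ᶠ x in l, 0 < v x) {ε : ℝ} (hε : 0 < ε) :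
    ∀ᶠ x in l, u x ≤ ε * v x := by
  filter_upwards [h.eventually (gt_mem_nhds hε), hv] with x hx hvx
  exact ((div_lt_iff₀ hvx).1 hx).le

theorem convolution_term_tendsto_zero_general {n : ℕ} (t₀ : ℝ) (α₀ : ℝ) (hα₀ : 0 < α₀)
    (α m : ℝ → ℝ) (g : ℝ → EuclideanSpace ℝ (Fin n))
    (hm : ContinuousOn m (Set.Ici t₀))
    (hg : ContinuousOn g (Set.Ici t₀))
    (hle : ∀ t, t₀ ≤ t → m t ≤ -α t ∧ -α t ≤ -α₀)
    (hlim : Tendsto (fun t => ‖g t‖ / α t) atTop (𝓝 0)) :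
    Tendsto (fun t => ∫ τ in t₀..t, Real.exp (∫ s in τ..t, m s) * ‖g τ‖)
      atTop (𝓝 0) := by
  refine tendsto_order.2 ⟨fun a ha => ?_, fun ε hε => ?_⟩
  · filter_upwards [eventually_ge_atTop t₀] with t ht
    exact ha.trans_le (integral_nonneg ht fun τ _ => by positivity)
  have hε₂ : 0 < ε / 2 := half_pos hε
  have hα_pos : ∀ᶠ t in atTop, 0 < α t := by
    filter_upwards [eventually_ge_atTop t₀] with t ht
    linarith [(hle t ht).2]
  have hg_le : ∀ᶠ τ in atTop, ‖g τ‖ ≤ ε / 2 * -m τ ∧ t₀ ≤ τ := by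
    filter_upwards [hlim.eventually_le_const_mul_of_div hα_pos hε₂, eventually_ge_atTop t₀]
      with τ hτ ht
    exact ⟨hτ.trans (mul_le_mul_of_nonneg_left (by linarith [(hle τ ht).1]) hε₂.le), ht⟩
  obtain ⟨T, hT⟩ := eventually_atTop.1 hg_le
  have hdecay : Tendsto (fun t => exp (-(α₀ * (t - T))) * ∫ τ in t₀..T, ‖g τ‖) atTop (𝓝 0) := by
    simpa [sub_eq_add_neg] using (tendsto_exp_neg_atTop_nhds_zero.comp
      ((tendsto_atTop_add_const_right _ (-T) tendsto_id).const_mul_atTop hα₀)).mul_const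
        (∫ τ in t₀..T, ‖g τ‖)
  filter_upwards [hdecay.eventually (gt_mem_nhds hε₂), eventually_ge_atTop T] with t hdt hTt
  have hbound := integral_exp_integral_mul_le (hT T le_rfl).2 hTt (hm.mono Icc_subset_Ici_self)
    (hg.norm.mono Icc_subset_Ici_self) (fun τ _ => norm_nonneg _) hα₀.le
    (fun s hs => (hle s hs.1).1.trans (hle s hs.1).2) hε₂.le (fun τ hτ => (hT τ hτ.1).1)
  linarith

/-- L'Hôpital step in the proof of Theorem 1. If
`m(t) ≤ -α(t) ≤ -α₀ < 0` and `‖g(t)‖/α(t) → 0` as `t → ∞`, then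
`∫_{t₀}^t exp(∫_τ^t m(s) ds) ‖g(τ)‖ dτ → 0` as `t → ∞`. -/
theorem convolution_term_tendsto_zero {n : ℕ} (t₀ : ℝ) (α₀ : ℝ) (hα₀ : 0 < α₀)
    (α m : ℝ → ℝ) (g : ℝ → EuclideanSpace ℝ (Fin n))
    (hα : ContinuousOn α (Set.Ici t₀)) (hm : ContinuousOn m (Set.Ici t₀))
    (hg : ContinuousOn g (Set.Ici t₀))
    (hle : ∀ t, t₀ ≤ t → m t ≤ -α t ∧ -α t ≤ -α₀)
    (hlim : Tendsto (fun t => ‖g t‖ / α t) atTop (𝓝 0)) :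
    Tendsto (fun t => ∫ τ in t₀..t, Real.exp (∫ s in τ..t, m s) * ‖g τ‖)
      atTop (𝓝 0) :=
  convolution_term_tendsto_zero_general t₀ α₀ hα₀ α m g hm hg hle hlim
end
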